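/- arXiv:1409.7171 — 2 statements merged into one kernel-verified Lean document; each statement's English description precedes it below -/
import Mathlib

section
/- Let f, g ∈ C²_c(E) (twice continuously differentiable with compact support) such that g is constant on an open neighborhood U (in the subspace topology of E) of supp(f). Then 𝓔(f,g) = Σ_{∅≠B⊂I} ∫_{E₊(B)} (∇^B f, ∇^B g) dμ_B = 0, i.e., the bilinear form is strongly local on C²_c(E). -/
open MeasureTheory Set

noncomputable section

def orthE (n : ℕ) : Set (Fin n → ℝ) := {x | ∀ i, 0 ≤ x i}

def Eplus (n : ℕ) (B : Finset (Fin n)) : Set (Fin n → ℝ) :=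
  {x | (∀ i ∈ B, 0 < x i) ∧ (∀ i ∉ B, x i = 0)}

def lamB (n : ℕ) (B : Finset (Fin n)) : Measure (Fin n → ℝ) :=
  Measure.pi fun i => if i ∈ B then volume.restrict (Ici (0 : ℝ)) else Measure.dirac 0

def mMeas (n : ℕ) (β : ℝ) : Measure (Fin n → ℝ) :=
  ∑ B : Finset (Fin n), (ENNReal.ofReal β) ^ (n - B.card) • lamB n B

/-- `μ_B = ϱ β^{n−#B} λ_B^{(n)}`. -/
def muB (n : ℕ) (β : ℝ) (ϱ : (Fin n → ℝ) → ℝ) (B : Finset (Fin n)) :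
    Measure (Fin n → ℝ) :=
  ((ENNReal.ofReal β) ^ (n - B.card) • lamB n B).withDensity fun x => ENNReal.ofReal (ϱ x)

/-- partial derivative `∂ᵢ f` -/
def pd (n : ℕ) (i : Fin n) (f : (Fin n → ℝ) → ℝ) (x : Fin n → ℝ) : ℝ :=
  fderiv ℝ f x (Pi.single i 1)

/-- `𝓔(f,g) = Σ_{∅≠B⊂I} ∫_{E₊(B)} (∇^B f, ∇^B g) dμ_B`. -/
def energyForm (n : ℕ) (β : ℝ) (ϱ : (Fin n → ℝ) → ℝ) (f g : (Fin n → ℝ) → ℝ) : ℝ :=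
  ∑ B ∈ Finset.univ.filter (fun B : Finset (Fin n) => B ≠ ∅),
    ∫ x in Eplus n B, (∑ i ∈ B, pd n i f x * pd n i g x) ∂(muB n β ϱ B)

/-!
The integrand vanishes pointwise. At `x ∈ E₊(B)` and `i ∈ B`, either `x ∉ supp f`, so `∂ᵢf(x) = 0`,
or `x ∈ U` with `xᵢ > 0`; then `x + t eᵢ` stays in `U ∩ E` for small `|t|`, `g` is constant along
that segment, and `∂ᵢg(x) = 0`.
-/

open Filter Topology

theorem Eplus_subset_orthE (n : ℕ) (B : Finset (Fin n)) : Eplus n B ⊆ orthE n := by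
  intro x hx i
  by_cases hi : i ∈ B
  · exact (hx.1 i hi).le
  · exact (hx.2 i hi).ge

theorem eventually_add_smul_single_mem_inter_orthE {n : ℕ} {U : Set (Fin n → ℝ)}
    (hU : IsOpen U) {x : Fin n → ℝ} (hxU : x ∈ U) (hxE : x ∈ orthE n) {i : Fin n}
    (hxi : 0 < x i) : ∀ᶠ t in 𝓝 (0 : ℝ), x + t • Pi.single i 1 ∈ U ∩ orthE n := by
  have hcont : Continuous fun t : ℝ => x + t • Pi.single i (1 : ℝ) := by fun_prop
  have hline := hcont.tendsto' 0 x (by simp)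
  filter_upwards [hline (hU.mem_nhds hxU), Ioi_mem_nhds (neg_neg_of_pos hxi)] with t htU ht
  refine ⟨htU, fun j => ?_⟩
  rcases eq_or_ne j i with rfl | hji
  · simp only [Pi.add_apply, Pi.smul_apply, Pi.single_eq_same, smul_eq_mul, mul_one]
    linarith [mem_Ioi.mp ht]
  · simpa [hji] using hxE j

theorem pd_eq_zero_of_eventually_eq_const {n : ℕ} {g : (Fin n → ℝ) → ℝ} {x : Fin n → ℝ}
    {i : Fin n} {c : ℝ} (hg : DifferentiableAt ℝ g x)
    (h : ∀ᶠ t in 𝓝 (0 : ℝ), g (x + t • Pi.single i 1) = c) : pd n i g x = 0 := by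
  have hconst : (fun t : ℝ => g (x + t • Pi.single i 1)) =ᶠ[𝓝 0] fun _ => c := h
  rw [pd, ← hg.lineDeriv_eq_fderiv, lineDeriv, hconst.deriv_eq, deriv_const]

theorem pd_eq_zero_of_notMem_tsupport {n : ℕ} (i : Fin n) {f : (Fin n → ℝ) → ℝ}
    {x : Fin n → ℝ} (hx : x ∉ tsupport f) : pd n i f x = 0 := by
  rw [pd, fderiv_of_notMem_tsupport ℝ hx, zero_apply]

theorem stmt3_general (n : ℕ) (β : ℝ) (ϱ : (Fin n → ℝ) → ℝ)
    (f g : (Fin n → ℝ) → ℝ)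
    (hg : ContDiff ℝ 2 g)
    (U : Set (Fin n → ℝ)) (hU : IsOpen U) (hsub : tsupport f ∩ orthE n ⊆ U)
    (c : ℝ) (hgconst : ∀ x ∈ U ∩ orthE n, g x = c) :
    energyForm n β ϱ f g = 0 := by
  refine Finset.sum_eq_zero fun B _ => setIntegral_eq_zero_of_forall_eq_zero fun x hx =>
    Finset.sum_eq_zero fun i hi => ?_
  have hxE := Eplus_subset_orthE n B hx
  by_cases hxf : x ∈ tsupport f
  · have hsegment :=
      eventually_add_smul_single_mem_inter_orthE hU (hsub ⟨hxf, hxE⟩) hxE (hx.1 i hi)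
    have hgx : DifferentiableAt ℝ g x := (hg.differentiable two_ne_zero).differentiableAt
    rw [pd_eq_zero_of_eventually_eq_const hgx (hsegment.mono fun t ht => hgconst _ ht), mul_zero]
  · rw [pd_eq_zero_of_notMem_tsupport i hxf, zero_mul]

theorem stmt3 (n : ℕ) (β : ℝ) (hβ : 0 < β) (ϱ : (Fin n → ℝ) → ℝ)
    (hϱnn : ∀ x, 0 ≤ ϱ x) (hϱint : Integrable ϱ (mMeas n β))
    (f g : (Fin n → ℝ) → ℝ)
    (hf : ContDiff ℝ 2 f) (hfc : HasCompactSupport f)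
    (hg : ContDiff ℝ 2 g) (hgc : HasCompactSupport g)
    (U : Set (Fin n → ℝ)) (hU : IsOpen U) (hsub : tsupport f ∩ orthE n ⊆ U)
    (c : ℝ) (hgconst : ∀ x ∈ U ∩ orthE n, g x = c) :
    energyForm n β ϱ f g = 0 :=
  stmt3_general n β ϱ f g hg U hU hsub c hgconst
end
end

section
/- For f, g ∈ C²_c(E) the identity 2·𝓔(gf, g) − 𝓔(g², f) = ∫_E f · (2 Σ_{∅≠B⊂I} Σ_{i∈B} (∂ᵢg)² 𝟙_{E₊(B)}) dμ holds, where μ = Σ_{∅≠B⊂I} μ_B. In other words, the energy measure of g ∈ C²_c(E) is ν_{⟨g⟩} = 2 Σ_{∅≠B⊂I} |∇^B g|² μ_B. -/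
open MeasureTheory Set

noncomputable section

/-!
By the product rule, `2 ∂ᵢ(gf) ∂ᵢg − ∂ᵢ(g²) ∂ᵢf = 2 f (∂ᵢg)²` pointwise, so the identity holds
integrand by integrand on each face `E₊(B)`. The integrands are continuous with compact support and
each `μ_B` is finite (it is dominated by `ϱ m_{n,β}`), so the integrals may be combined linearly.
-/

lemma smul_lamB_le_mMeas (n : ℕ) (β : ℝ) (B : Finset (Fin n)) :
    ENNReal.ofReal β ^ (n - B.card) • lamB n B ≤ mMeas n β :=
  Finset.single_le_sum (f := fun C : Finset (Fin n) => ENNReal.ofReal β ^ (n - C.card) • lamB n C)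
    (fun _ _ => Measure.zero_le _) (Finset.mem_univ B)

lemma isFiniteMeasure_muB {n : ℕ} {β : ℝ} {ϱ : (Fin n → ℝ) → ℝ}
    (hϱ : Integrable ϱ (mMeas n β)) (B : Finset (Fin n)) :
    IsFiniteMeasure (muB n β ϱ B) :=
  isFiniteMeasure_withDensity_ofReal (hϱ.mono_measure (smul_lamB_le_mMeas n β B)).2

section PartialDerivatives

variable {n : ℕ} {f g : (Fin n → ℝ) → ℝ}

lemma continuous_pd (hf : ContDiff ℝ 1 f) (i : Fin n) : Continuous (pd n i f) :=
  (hf.continuous_fderiv one_ne_zero).clm_apply continuous_const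

lemma HasCompactSupport.pd (hf : HasCompactSupport f) (i : Fin n) :
    HasCompactSupport (pd n i f) :=
  (hf.fderiv ℝ).comp_left (g := fun L : (Fin n → ℝ) →L[ℝ] ℝ => L (Pi.single i 1)) rfl

lemma pd_mul {x : Fin n → ℝ} (hf : DifferentiableAt ℝ f x) (hg : DifferentiableAt ℝ g x)
    (i : Fin n) : pd n i (fun y => f y * g y) x = f x * pd n i g x + g x * pd n i f x := by
  simp [pd, fderiv_fun_mul hf hg]

lemma pd_sq {x : Fin n → ℝ} (hg : DifferentiableAt ℝ g x) (i : Fin n) :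
    pd n i (fun y => g y ^ 2) x = 2 * g x * pd n i g x := by
  simp only [sq, pd_mul hg hg]
  ring

lemma two_mul_sum_pd_mul_sub_sum_pd_sq {x : Fin n → ℝ} (hf : DifferentiableAt ℝ f x)
    (hg : DifferentiableAt ℝ g x) (B : Finset (Fin n)) :
    2 * ∑ i ∈ B, pd n i (fun y => g y * f y) x * pd n i g x
        - ∑ i ∈ B, pd n i (fun y => g y ^ 2) x * pd n i f x
      = 2 * (f x * ∑ i ∈ B, pd n i g x ^ 2) := by
  simp only [pd_mul hg hf, pd_sq hg, Finset.mul_sum, ← Finset.sum_sub_distrib]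
  exact Finset.sum_congr rfl fun i _ => by ring

lemma integrable_sum_pd_mul_pd {μ : Measure (Fin n → ℝ)} [IsFiniteMeasure μ]
    (hf : ContDiff ℝ 1 f) (hg : ContDiff ℝ 1 g) (hgc : HasCompactSupport g) (B : Finset (Fin n)) :
    Integrable (fun x => ∑ i ∈ B, pd n i f x * pd n i g x) μ :=
  integrable_finsetSum B fun i _ =>
    ((continuous_pd hf i).mul (continuous_pd hg i)).integrable_of_hasCompactSupport
      ((hgc.pd i).mul_left)

end PartialDerivatives

theorem stmt6_general (n : ℕ) (β : ℝ) (ϱ : (Fin n → ℝ) → ℝ)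
    (hϱint : Integrable ϱ (mMeas n β))
    (f g : (Fin n → ℝ) → ℝ)
    (hf : ContDiff ℝ 2 f) (hfc : HasCompactSupport f)
    (hg : ContDiff ℝ 2 g) (hgc : HasCompactSupport g) :
    2 * energyForm n β ϱ (fun x => g x * f x) g -
        energyForm n β ϱ (fun x => g x ^ 2) f =
      2 * ∑ B ∈ Finset.univ.filter (fun B : Finset (Fin n) => B ≠ ∅),
        ∫ x in Eplus n B, f x * (∑ i ∈ B, pd n i g x ^ 2) ∂(muB n β ϱ B) := by
  have hf₁ : ContDiff ℝ 1 f := hf.of_le one_le_two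
  have hg₁ : ContDiff ℝ 1 g := hg.of_le one_le_two
  rw [energyForm, energyForm, Finset.mul_sum, Finset.mul_sum, ← Finset.sum_sub_distrib]
  refine Finset.sum_congr rfl fun B _ => ?_
  have := isFiniteMeasure_muB hϱint B
  rw [← integral_const_mul, ← integral_const_mul,
    ← integral_sub ((integrable_sum_pd_mul_pd (hg₁.mul hf₁) hg₁ hgc B).const_mul 2)
      (integrable_sum_pd_mul_pd (hg₁.pow 2) hf₁ hfc B)]
  exact integral_congr_ae (ae_of_all _ fun x =>
    two_mul_sum_pd_mul_sub_sum_pd_sq (hf₁.differentiable one_ne_zero x)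
      (hg₁.differentiable one_ne_zero x) B)

/-- The energy measure identity `2𝓔(gf,g) − 𝓔(g²,f) = ∫ f dν_⟨g⟩` with
`ν_⟨g⟩ = 2 Σ_{∅≠B⊂I} |∇^B g|² μ_B`. -/
theorem stmt6 (n : ℕ) (β : ℝ) (hβ : 0 < β) (ϱ : (Fin n → ℝ) → ℝ)
    (hϱnn : ∀ x, 0 ≤ ϱ x) (hϱmeas : Measurable ϱ) (hϱint : Integrable ϱ (mMeas n β))
    (f g : (Fin n → ℝ) → ℝ)
    (hf : ContDiff ℝ 2 f) (hfc : HasCompactSupport f)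
    (hg : ContDiff ℝ 2 g) (hgc : HasCompactSupport g) :
    2 * energyForm n β ϱ (fun x => g x * f x) g -
        energyForm n β ϱ (fun x => g x ^ 2) f =
      2 * ∑ B ∈ Finset.univ.filter (fun B : Finset (Fin n) => B ≠ ∅),
        ∫ x in Eplus n B, f x * (∑ i ∈ B, pd n i g x ^ 2) ∂(muB n β ϱ B) :=
  stmt6_general n β ϱ hϱint f g hf hfc hg hgc
end
end
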